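/- If m is a supermodular game, then the core of m equals the Weber set of m, i.e., C(m) is the convex hull of the marginal vectors x^m(τ,·) over all enumerations τ of N. -/

import Mathlib

open Finset

/-- A game is supermodular if `m A + m B ≤ m (A ∪ B) + m (A ∩ B)` for all `A, B`. -/
def Supermod {N : Type*} [DecidableEq N] (m : Finset N → ℝ) : Prop :=
  ∀ A B : Finset N, m A + m B ≤ m (A ∪ B) + m (A ∩ B)

/-- The initial segment `{π 0, ..., π (k-1)}` of the enumeration `π`. -/
def seg {N : Type*} [Fintype N] [DecidableEq N] (π : Fin (Fintype.card N) ≃ N) (k : ℕ) :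
    Finset N :=
  (Finset.univ.filter (fun j : Fin (Fintype.card N) => (j : ℕ) < k)).image π

/-- The marginal vector `x^m(π,·)` of the game `m` w.r.t. the enumeration `π`. -/
def marg {N : Type*} [Fintype N] [DecidableEq N] (m : Finset N → ℝ)
    (π : Fin (Fintype.card N) ≃ N) (i : N) : ℝ :=
  m (seg π ((π.symm i : ℕ) + 1)) - m (seg π ((π.symm i : ℕ)))

/-- The core of a game. -/
def core {N : Type*} [Fintype N] [DecidableEq N] (m : Finset N → ℝ) : Set (N → ℝ) :=
  {v | ∑ i, v i = m Finset.univ ∧ ∀ S : Finset N, m S ≤ ∑ i ∈ S, v i}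

/-! The marginal vectors lie in the core: they sum to `m N` by telescoping along the chain
`seg τ 0 ⊆ seg τ 1 ⊆ ⋯`, and supermodularity says that adding a player to a smaller coalition
gains less, so `m S` is bounded by the marginal contributions of the players of `S`. Since the
core is convex it contains the Weber set.

Conversely, if a core element `v` lay outside the Weber set, a linear functional `∑ i, c i * w i`
would separate it. Choose an enumeration `τ` of `N` along which `c` decreases. Abel
summation rewrites `∑ i, c i * (v i - marg m τ i)` as a combination, with the nonnegative
weights `c (τ k) - c (τ (k + 1))`, of the excesses `∑ i ∈ seg τ (k + 1), v i - m (seg τ (k + 1))`,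
which are nonnegative because `v` is in the core; this contradicts the separation. -/

theorem exists_equiv_fin_antitone_comp {α β : Type*} [Fintype α] [LinearOrder β] (c : α → β) :
    ∃ τ : Fin (Fintype.card α) ≃ α, Antitone (c ∘ τ) := by
  let e := (Fintype.equivFin α).symm
  refine ⟨(Tuple.sort (OrderDual.toDual ∘ c ∘ e)).trans e, ?_⟩
  exact monotone_toDual_comp_iff.1 (Tuple.monotone_sort (OrderDual.toDual ∘ c ∘ e))

theorem sum_range_mul_sub_nonneg {d H : ℕ → ℝ} {n : ℕ} (hd : ∀ k, k + 1 < n → d (k + 1) ≤ d k)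
    (hH : ∀ k, 0 ≤ H k) (h0 : H 0 = 0) (hn : H n = 0) :
    0 ≤ ∑ k ∈ range n, d k * (H (k + 1) - H k) := by
  have := sum_range_by_parts d (fun k => H (k + 1) - H k) n
  simp only [smul_eq_mul, sum_range_sub, h0, hn, sub_zero, mul_zero, zero_sub] at this
  rw [this, neg_nonneg]
  refine sum_nonpos fun k hk => mul_nonpos_of_nonpos_of_nonneg ?_ (hH _)
  exact sub_nonpos.2 (hd k (by simp at hk; omega))

theorem Supermod.sub_le_sub_insert {N : Type*} [DecidableEq N] {m : Finset N → ℝ}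
    (hsup : Supermod m) {T U : Finset N} {i : N} (hTU : T ⊆ U) (hi : i ∉ U) :
    m (insert i T) - m T ≤ m (insert i U) - m U := by
  have h := hsup (insert i T) U
  rw [insert_union, union_eq_right.2 hTU, insert_inter_of_notMem hi,
    inter_eq_left.2 hTU] at h
  linarith

section Enumeration

variable {N : Type*} [Fintype N] [DecidableEq N] (τ : Fin (Fintype.card N) ≃ N)

theorem mem_seg {k : ℕ} {i : N} : i ∈ seg τ k ↔ (τ.symm i : ℕ) < k := by
  simp only [seg, mem_image, mem_filter, mem_univ, true_and]
  exact ⟨by rintro ⟨j, hj, rfl⟩; simpa using hj, fun h => ⟨τ.symm i, h, by simp⟩⟩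

@[simp]
theorem seg_zero : seg τ 0 = ∅ := by
  ext i; simp [mem_seg]

theorem seg_of_card_le {k : ℕ} (hk : Fintype.card N ≤ k) : seg τ k = univ := by
  ext i; simpa [mem_seg] using (τ.symm i).2.trans_le hk

theorem seg_succ (j : Fin (Fintype.card N)) : seg τ (j + 1) = insert (τ j) (seg τ j) := by
  ext i
  simp only [mem_seg, mem_insert, Nat.lt_succ_iff_lt_or_eq, ← Fin.ext_iff, Equiv.symm_apply_eq]
  tauto

theorem seg_succ_of_card_le {k : ℕ} (hk : Fintype.card N ≤ k) : seg τ (k + 1) = seg τ k := by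
  rw [seg_of_card_le τ hk, seg_of_card_le τ (by omega)]

theorem apply_notMem_seg (j : Fin (Fintype.card N)) : τ j ∉ seg τ j := by
  simp [mem_seg]

theorem sum_seg_succ (w : N → ℝ) (j : Fin (Fintype.card N)) :
    ∑ i ∈ seg τ (j + 1), w i = w (τ j) + ∑ i ∈ seg τ j, w i := by
  rw [seg_succ, sum_insert (apply_notMem_seg τ j)]

theorem marg_apply (m : Finset N → ℝ) (j : Fin (Fintype.card N)) :
    marg m τ (τ j) = m (seg τ (j + 1)) - m (seg τ j) := by
  simp [marg]

theorem sum_seg_marg (m : Finset N → ℝ) (k : ℕ) :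
    ∑ i ∈ seg τ k, marg m τ i = m (seg τ k) - m ∅ := by
  induction k with
  | zero => simp
  | succ k ih =>
    by_cases hk : k < Fintype.card N
    · rw [sum_seg_succ τ _ ⟨k, hk⟩, marg_apply, ih]
      ring
    · rwa [seg_succ_of_card_le τ (not_lt.1 hk)]

theorem le_sum_marg {m : Finset N → ℝ} (hm : m ∅ = 0) (hsup : Supermod m) (S : Finset N) :
    m S ≤ ∑ i ∈ S, marg m τ i := by
  suffices h : ∀ k, m (S ∩ seg τ k) ≤ ∑ i ∈ S ∩ seg τ k, marg m τ i by
    simpa [seg_of_card_le τ le_rfl] using h (Fintype.card N)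
  intro k
  induction k with
  | zero => simp [hm]
  | succ k ih =>
    by_cases hk : k < Fintype.card N
    · have hk' := apply_notMem_seg τ ⟨k, hk⟩
      have hgain := hsup.sub_le_sub_insert (inter_subset_right (s₁ := S)) hk'
      rw [← seg_succ, ← marg_apply] at hgain
      rw [seg_succ τ ⟨k, hk⟩]
      by_cases hS : τ ⟨k, hk⟩ ∈ S
      · rw [inter_insert_of_mem hS, sum_insert fun h => hk' (mem_inter.1 h).2]
        linarith
      · rwa [inter_insert_of_notMem hS]
    · rwa [seg_succ_of_card_le τ (not_lt.1 hk)]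

theorem sum_mul_eq_sum_range_seg (c w : N → ℝ) :
    ∑ i, w i * c i = ∑ k ∈ range (Fintype.card N),
      (if h : k < Fintype.card N then c (τ ⟨k, h⟩) else 0) *
        (∑ i ∈ seg τ (k + 1), w i - ∑ i ∈ seg τ k, w i) := by
  rw [← Equiv.sum_comp τ, ← Fin.sum_univ_eq_sum_range]
  refine sum_congr rfl fun j _ => ?_
  rw [sum_seg_succ, dif_pos j.2]
  ring

end Enumeration

section Core

variable {N : Type*} [Fintype N] [DecidableEq N] {m : Finset N → ℝ}

theorem convex_core : Convex ℝ (core m) := by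
  intro x hx y hy a b ha hb hab
  have hsum : ∀ S : Finset N, ∑ i ∈ S, (a • x + b • y) i = a * ∑ i ∈ S, x i + b * ∑ i ∈ S, y i :=
    fun S => by simp [mul_sum, sum_add_distrib]
  refine ⟨?_, fun S => ?_⟩
  · rw [hsum, hx.1, hy.1, ← add_mul, hab, one_mul]
  · calc m S = a * m S + b * m S := by rw [← add_mul, hab, one_mul]
      _ ≤ _ := by rw [hsum]; gcongr; exacts [hx.2 S, hy.2 S]

theorem marg_mem_core (hm : m ∅ = 0) (hsup : Supermod m) (τ : Fin (Fintype.card N) ≃ N) :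
    marg m τ ∈ core m := by
  refine ⟨?_, le_sum_marg τ hm hsup⟩
  simpa [seg_of_card_le τ le_rfl, hm] using sum_seg_marg τ m (Fintype.card N)

theorem sum_marg_mul_le (hm : m ∅ = 0) {v : N → ℝ} (hv : v ∈ core m) {c : N → ℝ}
    {τ : Fin (Fintype.card N) ≃ N} (hc : Antitone (c ∘ τ)) :
    ∑ i, marg m τ i * c i ≤ ∑ i, v i * c i := by
  set d : ℕ → ℝ := fun k => if h : k < Fintype.card N then c (τ ⟨k, h⟩) else 0
  set H : ℕ → ℝ := fun k => ∑ i ∈ seg τ k, (v i - marg m τ i)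
  have hd : ∀ k, k + 1 < Fintype.card N → d (k + 1) ≤ d k := fun k hk => by
    simp only [d, dif_pos hk, dif_pos (Nat.lt_of_succ_lt hk)]
    exact hc (show (⟨k, _⟩ : Fin _) ≤ ⟨k + 1, hk⟩ from Fin.mk_le_mk.2 k.le_succ)
  have hH : ∀ k, 0 ≤ H k := fun k => by
    simpa only [H, sum_sub_distrib, sum_seg_marg, hm, sub_zero, sub_nonneg] using hv.2 (seg τ k)
  have hn : H (Fintype.card N) = 0 := by
    simp only [H, sum_sub_distrib, sum_seg_marg, hm, sub_zero, seg_of_card_le τ le_rfl, hv.1,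
      sub_self]
  have := sum_range_mul_sub_nonneg hd hH (by simp [H]) hn
  rw [← sum_mul_eq_sum_range_seg τ c] at this
  simpa [sub_mul, sum_sub_distrib] using this

theorem convexHull_marg_subset_core (hm : m ∅ = 0) (hsup : Supermod m) :
    convexHull ℝ {v : N → ℝ | ∃ τ : Fin (Fintype.card N) ≃ N, v = marg m τ} ⊆ core m :=
  convexHull_min (by rintro _ ⟨τ, rfl⟩; exact marg_mem_core hm hsup τ) convex_core

theorem core_subset_convexHull_marg (hm : m ∅ = 0) :
    core m ⊆ convexHull ℝ {v : N → ℝ | ∃ τ : Fin (Fintype.card N) ≃ N, v = marg m τ} := by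
  intro v hv
  by_contra hvW
  have hfin : {v : N → ℝ | ∃ τ : Fin (Fintype.card N) ≃ N, v = marg m τ}.Finite :=
    (Set.finite_range (marg m)).subset (by rintro _ ⟨τ, rfl⟩; exact ⟨τ, rfl⟩)
  obtain ⟨f, u, hfv, hfW⟩ :=
    geometric_hahn_banach_point_closed (convex_convexHull ℝ _) (hfin.isClosed_convexHull ℝ) hvW
  set c : N → ℝ := fun i => f fun j => if i = j then 1 else 0
  have hf : ∀ w, f w = ∑ i, w i * c i := fun w => by
    simpa using LinearMap.pi_apply_eq_sum_univ f.toLinearMap w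
  obtain ⟨τ, hτ⟩ := exists_equiv_fin_antitone_comp c
  have hle := sum_marg_mul_le hm hv hτ
  have hlt := hfW _ (subset_convexHull ℝ _ ⟨τ, rfl⟩)
  rw [← hf, ← hf] at hle
  linarith

end Core

/-- For a supermodular game, the core equals the Weber set, i.e. the convex hull
of the marginal vectors. -/
theorem stmt6 {N : Type*} [Fintype N] [DecidableEq N]
    (m : Finset N → ℝ) (hm : m ∅ = 0) (hsup : Supermod m) :
    core m = convexHull ℝ {v : N → ℝ | ∃ τ : Fin (Fintype.card N) ≃ N, v = marg m τ} :=
  (core_subset_convexHull_marg hm).antisymm (convexHull_marg_subset_core hm hsup)
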